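/- Let d be a distance function on a nonempty set M that is almost an ultrametric with constant C' ≥ 1, meaning d(w₀, wₗ) ≤ C' * max(d(w₀,w₁), …, d(w_{l-1},wₗ)) for every finite sequence w₀,…,wₗ in M. Define σ(x,y) as the infimum of max(d(w₀,w₁),…,d(w_{l-1},wₗ)) over all finite sequences with w₀ = x, wₗ = y. Then (C')⁻¹ d(x,y) ≤ σ(x,y) ≤ d(x,y) for all x,y, and σ is an ultrametric on M. -/
import Mathlib

private lemma sup'_reindex (l : ℕ) (hl : 0 < l) (f : ℕ → ℝ) :
    (Finset.range l).sup' (Finset.nonempty_range_iff.mpr hl.ne') (fun j => f (l - 1 - j)) =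
    (Finset.range l).sup' (Finset.nonempty_range_iff.mpr hl.ne') f := by
  apply le_antisymm
  · apply Finset.sup'_le
    intro j hj
    rw [Finset.mem_range] at hj
    exact Finset.le_sup' f (Finset.mem_range.mpr (by omega))
  · apply Finset.sup'_le
    intro j hj
    rw [Finset.mem_range] at hj
    have : f j = f (l - 1 - (l - 1 - j)) := by congr 1; omega
    rw [this]
    exact Finset.le_sup' (fun j => f (l - 1 - j)) (Finset.mem_range.mpr (by omega))

theorem almost_ultrametric_chain_ultrametric {M : Type*} [Nonempty M] (d : M → M → ℝ)
    (hd_nonneg : ∀ x y, 0 ≤ d x y) (hd_eq : ∀ x y, d x y = 0 ↔ x = y)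
    (hd_symm : ∀ x y, d x y = d y x)
    (C' : ℝ) (hC' : 1 ≤ C')
    (halmost : ∀ (l : ℕ) (hl : 0 < l) (w : ℕ → M),
      d (w 0) (w l) ≤ C' * (Finset.range l).sup'
        (Finset.nonempty_range_iff.mpr hl.ne') (fun j => d (w j) (w (j + 1))))
    (σ : M → M → ℝ)
    (hσ : ∀ x y, σ x y = sInf {s : ℝ | ∃ (l : ℕ) (hl : 0 < l) (w : ℕ → M),
      w 0 = x ∧ w l = y ∧ s = (Finset.range l).sup'
        (Finset.nonempty_range_iff.mpr hl.ne') (fun j => d (w j) (w (j + 1)))}) :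
    (∀ x y, C'⁻¹ * d x y ≤ σ x y ∧ σ x y ≤ d x y) ∧
    (∀ x y, 0 ≤ σ x y) ∧ (∀ x y, σ x y = 0 ↔ x = y) ∧
    (∀ x y, σ x y = σ y x) ∧ (∀ x y z, σ x z ≤ max (σ x y) (σ y z)) := by
  have hC0 : (0:ℝ) < C' := lt_of_lt_of_le one_pos hC'
  set S : M → M → Set ℝ := fun x y => {s : ℝ | ∃ (l : ℕ) (hl : 0 < l) (w : ℕ → M),
      w 0 = x ∧ w l = y ∧ s = (Finset.range l).sup'
        (Finset.nonempty_range_iff.mpr hl.ne') (fun j => d (w j) (w (j + 1)))} with hSdef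
  have hσ' : ∀ x y, σ x y = sInf (S x y) := hσ
  have hmem : ∀ x y, d x y ∈ S x y := by
    intro x y
    refine ⟨1, one_pos, fun j => if j = 0 then x else y, by simp, by simp, ?_⟩
    simp [Finset.range_one]
  have hlb : ∀ x y, ∀ s ∈ S x y, C'⁻¹ * d x y ≤ s := by
    rintro x y s ⟨l, hl, w, h0, hle, rfl⟩
    rw [inv_mul_le_iff₀ hC0]
    rw [← h0, ← hle]
    exact halmost l hl w
  have hne : ∀ x y, (S x y).Nonempty := fun x y => ⟨d x y, hmem x y⟩
  have hbdd : ∀ x y, BddBelow (S x y) := fun x y => ⟨_, hlb x y⟩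
  have hge : ∀ x y, C'⁻¹ * d x y ≤ σ x y := by
    intro x y; rw [hσ']; exact le_csInf (hne x y) (hlb x y)
  have hle : ∀ x y, σ x y ≤ d x y := by
    intro x y; rw [hσ']; exact csInf_le (hbdd x y) (hmem x y)
  have hnonneg : ∀ x y, 0 ≤ σ x y := fun x y =>
    le_trans (mul_nonneg (by positivity) (hd_nonneg x y)) (hge x y)
  -- reversal
  have hrev : ∀ x y, ∀ s ∈ S x y, s ∈ S y x := by
    rintro x y s ⟨l, hl, w, h0, hle', rfl⟩
    refine ⟨l, hl, fun j => w (l - j), by simpa using hle', by simp [h0], ?_⟩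
    have key : ∀ j ∈ Finset.range l,
        d (w (l - j)) (w (l - (j + 1))) =
        (fun k => d (w k) (w (k + 1))) (l - 1 - j) := by
      intro j hj
      rw [Finset.mem_range] at hj
      have h1 : l - (j+1) = l - 1 - j := by omega
      have h2 : l - 1 - j + 1 = l - j := by omega
      simp only [h1]
      rw [← h2, hd_symm]
    have e1 := Finset.sup'_congr (Finset.nonempty_range_iff.mpr hl.ne') rfl key
    have e2 := sup'_reindex l hl (fun k => d (w k) (w (k + 1)))
    exact (e1.trans e2).symm
  have hsymm : ∀ x y, σ x y = σ y x := by
    have h : ∀ x y, σ x y ≤ σ y x := by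
      intro x y
      rw [hσ' x y, hσ' y x]
      exact le_csInf (hne y x) (fun s hs => csInf_le (hbdd x y) (hrev y x s hs))
    exact fun x y => le_antisymm (h x y) (h y x)
  have heq : ∀ x y, σ x y = 0 ↔ x = y := by
    intro x y
    constructor
    · intro h
      have := hge x y
      rw [h] at this
      have hd0 : d x y = 0 := by
        by_contra hne0
        have hdpos : 0 < d x y := lt_of_le_of_ne (hd_nonneg x y) (Ne.symm hne0)
        have := mul_pos (inv_pos.mpr hC0) hdpos
        linarith
      exact (hd_eq x y).mp hd0
    · rintro rfl
      exact le_antisymm (by simpa [(hd_eq x x).mpr rfl] using hle x x) (hnonneg x x)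
  -- concatenation / ultrametric
  have htri : ∀ x y z, σ x z ≤ max (σ x y) (σ y z) := by
    intro x y z
    apply le_of_forall_pos_le_add
    intro ε hε
    obtain ⟨s₁, hs₁, hs₁lt⟩ : ∃ s ∈ S x y, s < σ x y + ε := by
      apply exists_lt_of_csInf_lt (hne x y)
      rw [← hσ']; linarith
    obtain ⟨s₂, hs₂, hs₂lt⟩ : ∃ s ∈ S y z, s < σ y z + ε := by
      apply exists_lt_of_csInf_lt (hne y z)
      rw [← hσ']; linarith
    obtain ⟨l₁, hl₁, w₁, h10, h1l, rfl⟩ := hs₁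
    obtain ⟨l₂, hl₂, w₂, h20, h2l, rfl⟩ := hs₂
    set w : ℕ → M := fun j => if j ≤ l₁ then w₁ j else w₂ (j - l₁) with hw
    have hwge : ∀ j, l₁ ≤ j → w j = w₂ (j - l₁) := by
      intro j hj
      rcases eq_or_lt_of_le hj with rfl | hlt
      · simp [hw, h1l, h20.symm]
      · simp [hw, Nat.not_le.mpr hlt]
    have hl : 0 < l₁ + l₂ := by omega
    have hmem' : (Finset.range (l₁ + l₂)).sup'
        (Finset.nonempty_range_iff.mpr hl.ne') (fun j => d (w j) (w (j + 1))) ∈ S x z := by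
      refine ⟨l₁ + l₂, hl, w, ?_, ?_, rfl⟩
      · simp [hw, h10]
      · rw [hwge _ (by omega)]
        simpa using h2l
    have hsup : (Finset.range (l₁ + l₂)).sup'
        (Finset.nonempty_range_iff.mpr hl.ne') (fun j => d (w j) (w (j + 1))) ≤
        max ((Finset.range l₁).sup' (Finset.nonempty_range_iff.mpr hl₁.ne')
          (fun j => d (w₁ j) (w₁ (j + 1))))
        ((Finset.range l₂).sup' (Finset.nonempty_range_iff.mpr hl₂.ne')
          (fun j => d (w₂ j) (w₂ (j + 1)))) := by
      apply Finset.sup'_le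
      intro j hj
      rw [Finset.mem_range] at hj
      by_cases hcase : j < l₁
      · have e1 : w j = w₁ j := by simp [hw, Nat.le_of_lt hcase]
        have e2 : w (j + 1) = w₁ (j + 1) := by simp [hw, show j + 1 ≤ l₁ from hcase]
        rw [e1, e2]
        exact le_max_of_le_left (Finset.le_sup' (fun k => d (w₁ k) (w₁ (k + 1)))
          (Finset.mem_range.mpr hcase))
      · push_neg at hcase
        have e1 : w j = w₂ (j - l₁) := hwge j hcase
        have e2 : w (j + 1) = w₂ (j - l₁ + 1) := by
          rw [hwge _ (by omega)]; congr 1; omega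
        rw [e1, e2]
        exact le_max_of_le_right (Finset.le_sup' (fun k => d (w₂ k) (w₂ (k + 1)))
          (Finset.mem_range.mpr (by omega)))
    have h0 : σ x z ≤ (Finset.range (l₁ + l₂)).sup'
        (Finset.nonempty_range_iff.mpr hl.ne') (fun j => d (w j) (w (j + 1))) := by
      rw [hσ']; exact csInf_le (hbdd x z) hmem'
    have h1 : σ x z ≤ max (σ x y + ε) (σ y z + ε) :=
      h0.trans (hsup.trans (max_le_max hs₁lt.le hs₂lt.le))
    calc σ x z ≤ max (σ x y + ε) (σ y z + ε) := h1
    _ = max (σ x y) (σ y z) + ε := max_add_add_right _ _ _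
  exact ⟨fun x y => ⟨hge x y, hle x y⟩, hnonneg, heq, hsymm, htri⟩
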